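/- Let Δ be a root system with Weyl group W, positive system Δ⁺, and ρ the half sum of positive roots. If λ is dominant with respect to Δ⁺ and also dominant with respect to the positive system wΔ⁺ for some w ∈ W, then ‖λ − ρ‖ = ‖λ − wρ‖. -/

import Mathlib

/-!
Every `w ∈ W` permutes `Δ`, so `wΔ⁺` is again a positive system, with half sum `wρ`. A root lying
in one of the positive systems `Δ⁺`, `wΔ⁺` but not in the other has its negative in the other, so a `λ`
dominant for both is orthogonal to it. Hence `⟪λ, ρ⟫ = ⟪λ, wρ⟫`, and since `‖ρ‖ = ‖wρ‖` the
expansion `‖λ - x‖² = ‖λ‖² - 2⟪λ, x⟫ + ‖x‖²` gives the claim.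
-/

open scoped RealInnerProductSpace

variable {V : Type*} [NormedAddCommGroup V] [InnerProductSpace ℝ V] [FiniteDimensional ℝ V]

/-- Reflection in the hyperplane orthogonal to `α`. -/
noncomputable def rootReflection (α : V) : V ≃ₗᵢ[ℝ] V :=
  Submodule.reflection (Submodule.span ℝ {α})ᗮ

/-- `Δ` is a (reduced, crystallographic) root system in `V`. -/
structure IsRootSystem (Δ : Finset V) : Prop where
  nonzero : (0 : V) ∉ Δ
  neg_mem : ∀ α ∈ Δ, -α ∈ Δ
  reflect_mem : ∀ α ∈ Δ, ∀ β ∈ Δ, rootReflection α β ∈ Δ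
  crystallographic : ∀ α ∈ Δ, ∀ β ∈ Δ, ∃ n : ℤ, 2 * ⟪β, α⟫ / ⟪α, α⟫ = (n : ℝ)
  reduced : ∀ α ∈ Δ, ∀ t : ℝ, t • α ∈ Δ → t = 1 ∨ t = -1

/-- The Weyl group: the subgroup of linear isometries generated by root reflections. -/
def weylGroup (Δ : Finset V) : Subgroup (V ≃ₗᵢ[ℝ] V) :=
  Subgroup.closure { g | ∃ α ∈ Δ, g = rootReflection α }

/-- `P` is a positive system for the root system `Δ`. -/
structure IsPositiveSystem (Δ P : Finset V) : Prop where
  subset : P ⊆ Δ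
  mem_or_neg_mem : ∀ α ∈ Δ, α ∈ P ∨ -α ∈ P
  not_neg_mem : ∀ α ∈ P, -α ∉ P

/-- Half sum of the elements of `P`. -/
noncomputable def halfSum (P : Finset V) : V := (2:ℝ)⁻¹ • ∑ α ∈ P, α

/-- `λ` is dominant with respect to the set of positive roots `P`. -/
def IsDominant (l : V) (P : Finset V) : Prop := ∀ α ∈ P, 0 ≤ ⟪l, α⟫

lemma Finset.image_eq_self_of_mapsTo {α : Type*} [DecidableEq α] {s : Finset α} {f : α → α}
    (hf : f.Injective) (h : ∀ x ∈ s, f x ∈ s) : s.image f = s :=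
  Finset.eq_of_subset_of_card_le (Finset.image_subset_iff.mpr h)
    (Finset.card_image_of_injective s hf).ge

section

variable {E : Type*} [NormedAddCommGroup E] [InnerProductSpace ℝ E]

lemma norm_sub_eq_norm_sub_of_inner_eq {l x y : E} (hnorm : ‖x‖ = ‖y‖) (hinner : ⟪l, x⟫ = ⟪l, y⟫) :
    ‖l - x‖ = ‖l - y‖ := by
  refine (sq_eq_sq₀ (norm_nonneg _) (norm_nonneg _)).mp ?_
  rw [norm_sub_sq_real, norm_sub_sq_real, hnorm, hinner]

variable [DecidableEq E]

lemma LinearIsometryEquiv.map_halfSum (w : E ≃ₗᵢ[ℝ] E) (P : Finset E) :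
    w (halfSum P) = halfSum (P.image w) := by
  rw [halfSum, halfSum, map_smul, map_sum, Finset.sum_image fun _ _ _ _ h => w.injective h]

lemma IsRootSystem.image_eq_self_of_mem_weylGroup {Δ : Finset E} (hΔ : IsRootSystem Δ)
    {w : E ≃ₗᵢ[ℝ] E} (hw : w ∈ weylGroup Δ) : Δ.image w = Δ := by
  induction hw using Subgroup.closure_induction with
  | mem g hg =>
    obtain ⟨α, hα, rfl⟩ := hg
    exact Finset.image_eq_self_of_mapsTo (rootReflection α).injective (hΔ.reflect_mem α hα)
  | one => exact Finset.image_id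
  | mul g₁ g₂ _ _ h₁ h₂ =>
    rw [LinearIsometryEquiv.coe_mul, ← Finset.image_image, h₂, h₁]
  | inv g _ h =>
    conv_lhs => rw [← h]
    rw [Finset.image_image, LinearIsometryEquiv.coe_inv, LinearIsometryEquiv.symm_comp_self,
      Finset.image_id]

lemma IsPositiveSystem.image {Δ P : Finset E} (hP : IsPositiveSystem Δ P) {w : E ≃ₗᵢ[ℝ] E}
    (hw : Δ.image w = Δ) : IsPositiveSystem Δ (P.image w) where
  subset := hw ▸ Finset.image_subset_image hP.subset
  mem_or_neg_mem α hα := by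
    obtain ⟨β, hβ, rfl⟩ := Finset.mem_image.mp (hw.symm ▸ hα)
    rcases hP.mem_or_neg_mem β hβ with h | h
    · exact .inl (Finset.mem_image_of_mem w h)
    · exact .inr (by simpa using Finset.mem_image_of_mem w h)
  not_neg_mem α hα hneg := by
    obtain ⟨β, hβ, rfl⟩ := Finset.mem_image.mp hα
    obtain ⟨γ, hγ, hγβ⟩ := Finset.mem_image.mp hneg
    rw [← map_neg, w.injective.eq_iff] at hγβ
    exact hP.not_neg_mem β hβ (hγβ ▸ hγ)

lemma IsDominant.inner_eq_zero_of_mem_sdiff {Δ P Q : Finset E} (hP : IsPositiveSystem Δ P)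
    (hQ : IsPositiveSystem Δ Q) {l : E} (hlP : IsDominant l P) (hlQ : IsDominant l Q) {α : E}
    (hα : α ∈ P \ Q) : ⟪l, α⟫ = 0 := by
  obtain ⟨hαP, hαQ⟩ := Finset.mem_sdiff.mp hα
  have hneg : -α ∈ Q := (hQ.mem_or_neg_mem α (hP.subset hαP)).resolve_left hαQ
  have := hlQ _ hneg
  rw [inner_neg_right] at this
  linarith [hlP α hαP]

lemma IsDominant.inner_halfSum_eq {Δ P Q : Finset E} (hP : IsPositiveSystem Δ P)
    (hQ : IsPositiveSystem Δ Q) {l : E} (hlP : IsDominant l P) (hlQ : IsDominant l Q) :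
    ⟪l, halfSum P⟫ = ⟪l, halfSum Q⟫ := by
  have hsum : ∑ α ∈ P, ⟪l, α⟫ = ∑ α ∈ Q, ⟪l, α⟫ := by
    rw [← Finset.sum_inter_add_sum_sdiff P Q, ← Finset.sum_inter_add_sum_sdiff Q P,
      Finset.sum_eq_zero fun _ => hlP.inner_eq_zero_of_mem_sdiff hP hQ hlQ,
      Finset.sum_eq_zero fun _ => hlQ.inner_eq_zero_of_mem_sdiff hQ hP hlP, Finset.inter_comm]
  simp only [halfSum, inner_smul_right, inner_sum, hsum]

end

theorem stmt1 [DecidableEq V] (Δ P : Finset V) (hΔ : IsRootSystem Δ) (hP : IsPositiveSystem Δ P)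
    (l : V) (hl : IsDominant l P) (w : V ≃ₗᵢ[ℝ] V) (hw : w ∈ weylGroup Δ)
    (hl2 : IsDominant l (P.image w)) :
    ‖l - halfSum P‖ = ‖l - w (halfSum P)‖ := by
  have hwP : IsPositiveSystem Δ (P.image w) := hP.image (hΔ.image_eq_self_of_mem_weylGroup hw)
  refine norm_sub_eq_norm_sub_of_inner_eq (w.norm_map _).symm ?_
  rw [w.map_halfSum]
  exact hl.inner_halfSum_eq hP hwP hl2
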